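/- The truncated braid group B_3(3) = ⟨σ₁, σ₂ | σ₁σ₂σ₁ = σ₂σ₁σ₂, σ₁³ = σ₂³ = 1⟩ has order 24. -/

import Mathlib

/-- The relations of the truncated braid group
`B₃(d) = ⟨σ₁, σ₂ | σ₁σ₂σ₁ = σ₂σ₁σ₂, σ₁^d = σ₂^d = 1⟩`. -/
def truncatedBraid3Rels (d : ℕ) : Set (FreeGroup (Fin 2)) :=
  {FreeGroup.of 0 * FreeGroup.of 1 * FreeGroup.of 0 *
      (FreeGroup.of 1 * FreeGroup.of 0 * FreeGroup.of 1)⁻¹,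
   FreeGroup.of 0 ^ d, FreeGroup.of 1 ^ d}

/-- The truncated braid group `B₃(d)`. -/
def TruncatedBraid3 (d : ℕ) : Type := PresentedGroup (truncatedBraid3Rels d)

instance (d : ℕ) : Group (TruncatedBraid3 d) := inferInstanceAs (Group (PresentedGroup _))

/-- The generator `σ₁` of `B₃(d)`. -/
def TruncatedBraid3.σ₁ (d : ℕ) : TruncatedBraid3 d := PresentedGroup.of 0

/-- The generator `σ₂` of `B₃(d)`. -/
def TruncatedBraid3.σ₂ (d : ℕ) : TruncatedBraid3 d := PresentedGroup.of 1

/-- The full twist `Δ² = (σ₁σ₂)³` in `B₃(d)`. -/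
def TruncatedBraid3.fullTwist (d : ℕ) : TruncatedBraid3 d :=
  (TruncatedBraid3.σ₁ d * TruncatedBraid3.σ₂ d) ^ 3

/-
Twenty-four words in `σ₁, σ₂` exhaust `B₃(3)`: a finite subset of a group that contains `1` and is
stable under left multiplication by a generating set is the whole group, and stability is checked
by rewriting with the Knuth–Bendix completion of the defining relations. The 24 words are pairwise
distinct because their images in `SL(2, 𝔽₃)` are.
-/

open scoped Pointwise in
theorem Set.eq_univ_of_one_mem_of_smul_subset {G : Type*} [Group G] {s L : Set G}
    (hs : Subgroup.closure s = ⊤) (hL : L.Finite) (h1 : 1 ∈ L) (hsL : ∀ g ∈ s, g • L ⊆ L) :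
    L = Set.univ := by
  have hstab : MulAction.stabilizer G L = ⊤ :=
    top_unique <| hs ▸ (Subgroup.closure_le _).2 fun g hg ↦
      (MulAction.mem_stabilizer_set_iff_smul_set_subset hL).2 (hsL g hg)
  refine Set.eq_univ_of_forall fun g ↦ ?_
  have hg : g • L = L := MulAction.mem_stabilizer_iff.1 (hstab ▸ Subgroup.mem_top g)
  simpa [hg] using Set.smul_mem_smul_set (a := g) h1

namespace TruncatedBraid3

variable {d : ℕ}

theorem mk_eq_one_of_mem_rels {r : FreeGroup (Fin 2)} (hr : r ∈ truncatedBraid3Rels d) :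
    PresentedGroup.mk (truncatedBraid3Rels d) r = 1 :=
  (QuotientGroup.eq_one_iff r).2 (Subgroup.subset_normalClosure hr)

theorem braid : σ₁ d * σ₂ d * σ₁ d = σ₂ d * σ₁ d * σ₂ d := by
  have h := mk_eq_one_of_mem_rels (d := d) (Set.mem_insert _ _)
  rwa [map_mul, map_inv, mul_inv_eq_one] at h

theorem σ₁_pow : σ₁ d ^ d = 1 := by
  have h := mk_eq_one_of_mem_rels (d := d) (Set.mem_insert_of_mem _ (Set.mem_insert _ _))
  rwa [map_pow] at h

theorem σ₂_pow : σ₂ d ^ d = 1 := by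
  have h := mk_eq_one_of_mem_rels (d := d) (Set.mem_insert_of_mem _ (Set.mem_insert_of_mem _ rfl))
  rwa [map_pow] at h

theorem closure_σ₁_σ₂ : Subgroup.closure {σ₁ d, σ₂ d} = ⊤ := by
  have hrange : Set.range (PresentedGroup.of (rels := truncatedBraid3Rels d)) =
      {PresentedGroup.of 0, PresentedGroup.of 1} := by
    ext g
    simp [Fin.exists_fin_two, eq_comm]
  exact hrange ▸ PresentedGroup.closure_range_of _

variable {G : Type*} [Group G] {x y : G}

def lift (hxy : x * y * x = y * x * y) (hx : x ^ d = 1) (hy : y ^ d = 1) : TruncatedBraid3 d →* G :=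
  PresentedGroup.toGroup (f := ![x, y]) <| by
    rintro r (rfl | rfl | rfl) <;> simp [hxy, hx, hy]

theorem lift_σ₁ (hxy : x * y * x = y * x * y) (hx : x ^ d = 1) (hy : y ^ d = 1) :
    lift hxy hx hy (σ₁ d) = x :=
  PresentedGroup.toGroup.of _

theorem lift_σ₂ (hxy : x * y * x = y * x * y) (hx : x ^ d = 1) (hy : y ^ d = 1) :
    lift hxy hx hy (σ₂ d) = y :=
  PresentedGroup.toGroup.of _

local notation "a" => σ₁ 3
local notation "b" => σ₂ 3

theorem σ₁_mul_σ₁_mul_σ₁_mul (x : TruncatedBraid3 3) : a * (a * (a * x)) = x := by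
  rw [← mul_assoc, ← mul_assoc, ← pow_three', σ₁_pow, one_mul]

theorem σ₂_mul_σ₂_mul_σ₂_mul (x : TruncatedBraid3 3) : b * (b * (b * x)) = x := by
  rw [← mul_assoc, ← mul_assoc, ← pow_three', σ₂_pow, one_mul]

theorem braid_mul (x : TruncatedBraid3 3) : b * (a * (b * x)) = a * (b * (a * x)) := by
  simp only [← mul_assoc, braid]

/- Knuth–Bendix completion of the three rules above, on right-associated words; each rule is named
after its left-hand side. -/
theorem rule_baaba (x : TruncatedBraid3 3) :
    b * (a * (a * (b * (a * x)))) = a * (b * (a * (a * (b * x)))) := by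
  rw [← braid_mul, braid_mul]

theorem rule_baabb (x : TruncatedBraid3 3) :
    b * (a * (a * (b * (b * x)))) = a * (a * (b * (b * (a * x)))) := by
  conv_lhs => rw [← σ₁_mul_σ₁_mul_σ₁_mul (b * _), ← braid_mul (a * (b * (b * x))),
    ← braid_mul (b * (b * x)), σ₂_mul_σ₂_mul_σ₂_mul]

theorem rule_bbaab (x : TruncatedBraid3 3) :
    b * (b * (a * (a * (b * x)))) = a * (b * (b * (a * (a * x)))) := by
  conv_lhs => rw [← σ₁_mul_σ₁_mul_σ₁_mul x, ← braid_mul (a * (a * x)),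
    ← braid_mul (b * (a * (a * x))), σ₂_mul_σ₂_mul_σ₂_mul]

/- The irreducible words of the rewriting system above. They carry a tail `x` so that the rules,
stated with a tail, also apply at the end of a word; the words themselves are `normalForms 1`. -/
def normalForms (x : TruncatedBraid3 3) : List (TruncatedBraid3 3) :=
  [x, a * x, b * x, a * (a * x), b * (a * x), a * (b * x), b * (b * x), b * (a * (a * x)),
   a * (b * (a * x)), b * (b * (a * x)), a * (a * (b * x)), a * (b * (b * x)),
   a * (b * (a * (a * x))), b * (b * (a * (a * x))), a * (a * (b * (a * x))),
   a * (b * (b * (a * x))), b * (a * (a * (b * x))), a * (a * (b * (b * x))),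
   a * (a * (b * (a * (a * x)))), a * (b * (b * (a * (a * x)))), a * (b * (a * (a * (b * x)))),
   a * (a * (b * (b * (a * x)))), a * (a * (b * (a * (a * (b * x))))),
   a * (a * (b * (b * (a * (a * x)))))]

theorem mul_mem_normalForms {g : TruncatedBraid3 3} (hg : g ∈ ({a, b} : Set _))
    {x y : TruncatedBraid3 3} (hy : y ∈ normalForms x) : g * y ∈ normalForms x := by
  simp only [normalForms, List.mem_cons, List.not_mem_nil, or_false] at hy ⊢
  rcases hg with rfl | rfl <;>
  rcases hy with rfl | rfl | rfl | rfl | rfl | rfl | rfl | rfl | rfl | rfl | rfl | rfl | rfl |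
    rfl | rfl | rfl | rfl | rfl | rfl | rfl | rfl | rfl | rfl | rfl <;>
  simp only [σ₁_mul_σ₁_mul_σ₁_mul, σ₂_mul_σ₂_mul_σ₂_mul, braid_mul, rule_baaba, rule_baabb,
    rule_bbaab, true_or, or_true]

theorem mem_normalForms_one (g : TruncatedBraid3 3) : g ∈ normalForms 1 := by
  have hcover : {y | y ∈ normalForms 1} = Set.univ :=
    Set.eq_univ_of_one_mem_of_smul_subset closure_σ₁_σ₂ (List.finite_toSet _)
      List.mem_cons_self fun _ hg ↦ by
        rintro _ ⟨y, hy, rfl⟩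
        exact mul_mem_normalForms hg hy
  exact Set.eq_univ_iff_forall.1 hcover g

/- Reduction mod 3 of the standard representation `σ₁ ↦ [[1, 1], [0, 1]]`,
`σ₂ ↦ [[1, 0], [-1, 1]]` of `B₃` in `SL(2, ℤ)`. -/
def toSL : TruncatedBraid3 3 →* Matrix.SpecialLinearGroup (Fin 2) (ZMod 3) :=
  lift (x := ⟨!![1, 1; 0, 1], by decide⟩) (y := ⟨!![1, 0; -1, 1], by decide⟩)
    (by decide) (by decide) (by decide)

theorem toSL_σ₁ : toSL a = ⟨!![1, 1; 0, 1], by decide⟩ := lift_σ₁ _ _ _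

theorem toSL_σ₂ : toSL b = ⟨!![1, 0; -1, 1], by decide⟩ := lift_σ₂ _ _ _

theorem nodup_normalForms_one : (normalForms 1).Nodup := by
  refine List.Nodup.of_map toSL ?_
  simp only [normalForms, List.map_cons, List.map_nil, map_mul, map_one, toSL_σ₁, toSL_σ₂]
  decide

end TruncatedBraid3

/-- The truncated braid group `B₃(3)` has order 24. -/
theorem truncatedBraid3_card_3 : Nat.card (TruncatedBraid3 3) = 24 := by
  classical
  rw [← Nat.card_congr (TruncatedBraid3.nodup_normalForms_one.getEquivOfForallMemList _
    TruncatedBraid3.mem_normalForms_one), Nat.card_fin]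
  rfl
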